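/- For matrices, row-wise shrinkage: the matrix Y whose i-th row is max(1 − λ/‖Xᵢ‖₂, 0) · Xᵢ (and 0 if Xᵢ = 0) minimizes (1/2)‖Y − X‖_F² + λ‖Y‖₂₁ over all matrices Y, for λ > 0. -/

import Mathlib

/-!
The objective splits into a sum over rows, so it suffices to show that `x ↦ max (1 - λ/‖x‖) 0 • x`
minimises `z ↦ ½‖z - x‖² + λ‖z‖` in any real normed space. By the reverse triangle inequality
`‖z - x‖ ≥ |‖z‖ - ‖x‖|` this objective is at least the scalar objective `½(s - ‖x‖)² + λs` at
`s = ‖z‖`, which is minimised over `s ≥ 0` by soft thresholding `s = max (‖x‖ - λ) 0`; the shrunk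
vector, a multiple of `x` of exactly that norm, attains it.
-/

section GroupSoftThreshold

variable {E : Type*} [SeminormedAddCommGroup E] [NormedSpace ℝ E] {lam : ℝ}

-- At `‖x‖ = 0` the junk value `lam / 0 = 0` makes the factor `1`, so the result is `x` itself
-- (which is `0` in a normed space): no case split is needed, unlike in the row formula.
noncomputable def groupSoftThreshold (lam : ℝ) (x : E) : E :=
  max (1 - lam / ‖x‖) 0 • x

theorem norm_groupSoftThreshold (hlam : 0 ≤ lam) (x : E) :
    ‖groupSoftThreshold lam x‖ = max (‖x‖ - lam) 0 := by
  rw [groupSoftThreshold, norm_smul, Real.norm_of_nonneg (le_max_right _ _),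
    max_mul_of_nonneg _ _ (norm_nonneg x), zero_mul]
  rcases (norm_nonneg x).eq_or_lt with hx | hx
  · simp [← hx, hlam]
  · rw [sub_mul, one_mul, div_mul_cancel₀ _ hx.ne']

theorem norm_groupSoftThreshold_sub_self (hlam : 0 ≤ lam) (x : E) :
    ‖groupSoftThreshold lam x - x‖ = ‖x‖ - ‖groupSoftThreshold lam x‖ := by
  have hc : max (1 - lam / ‖x‖) 0 ≤ 1 :=
    max_le (sub_le_self _ (div_nonneg hlam (norm_nonneg x))) zero_le_one
  have hsub : groupSoftThreshold lam x - x = (max (1 - lam / ‖x‖) 0 - 1) • x := by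
    rw [groupSoftThreshold, sub_smul, one_smul]
  rw [hsub, groupSoftThreshold, norm_smul, norm_smul, Real.norm_of_nonpos (by linarith),
    Real.norm_of_nonneg (le_max_right _ _)]
  ring

theorem softThreshold_objective_le (r : ℝ) {s : ℝ} (hs : 0 ≤ s) :
    1 / 2 * (max (r - lam) 0 - r) ^ 2 + lam * max (r - lam) 0 ≤ 1 / 2 * (s - r) ^ 2 + lam * s := by
  rcases le_total (r - lam) 0 with h | h
  · rw [max_eq_right h]
    nlinarith [mul_nonneg hs hs, mul_nonneg hs (neg_nonneg.mpr h)]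
  · rw [max_eq_left h]
    nlinarith [sq_nonneg (s - r + lam)]

theorem groupSoftThreshold_minimizes (hlam : 0 ≤ lam) (x z : E) :
    1 / 2 * ‖groupSoftThreshold lam x - x‖ ^ 2 + lam * ‖groupSoftThreshold lam x‖ ≤
      1 / 2 * ‖z - x‖ ^ 2 + lam * ‖z‖ := by
  have hdist : (‖z‖ - ‖x‖) ^ 2 ≤ ‖z - x‖ ^ 2 := by
    rw [← sq_abs]
    exact pow_le_pow_left₀ (abs_nonneg _) (abs_norm_sub_norm_le z x) 2
  calc 1 / 2 * ‖groupSoftThreshold lam x - x‖ ^ 2 + lam * ‖groupSoftThreshold lam x‖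
      = 1 / 2 * (max (‖x‖ - lam) 0 - ‖x‖) ^ 2 + lam * max (‖x‖ - lam) 0 := by
        rw [norm_groupSoftThreshold_sub_self hlam, norm_groupSoftThreshold hlam]; ring
    _ ≤ 1 / 2 * (‖z‖ - ‖x‖) ^ 2 + lam * ‖z‖ := softThreshold_objective_le _ (norm_nonneg z)
    _ ≤ 1 / 2 * ‖z - x‖ ^ 2 + lam * ‖z‖ := by gcongr

end GroupSoftThreshold

theorem EuclideanSpace.norm_toLp {ι : Type*} [Fintype ι] (v : ι → ℝ) :
    ‖WithLp.toLp 2 v‖ = Real.sqrt (∑ j, v j ^ 2) := by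
  simp [EuclideanSpace.norm_eq]

theorem EuclideanSpace.norm_toLp_sub_sq {ι : Type*} [Fintype ι] (v w : ι → ℝ) :
    ‖WithLp.toLp 2 v - WithLp.toLp 2 w‖ ^ 2 = ∑ j, (v j - w j) ^ 2 := by
  rw [← WithLp.toLp_sub, EuclideanSpace.norm_toLp, Real.sq_sqrt (by positivity)]
  rfl

theorem groupSoftThreshold_toLp {ι : Type*} [Fintype ι] (lam : ℝ) (v : ι → ℝ) :
    groupSoftThreshold lam (WithLp.toLp 2 v) = WithLp.toLp 2 (fun j =>
      if Real.sqrt (∑ j', v j' ^ 2) = 0 then 0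
      else max (1 - lam / Real.sqrt (∑ j', v j' ^ 2)) 0 * v j) := by
  rw [← EuclideanSpace.norm_toLp, groupSoftThreshold]
  split_ifs with hv
  · rw [norm_eq_zero.mp hv, smul_zero]
    rfl
  · rfl

theorem row_shrinkage_minimizes (m n : ℕ) (X : Fin m → Fin n → ℝ)
    (lam : ℝ) (hlam : 0 < lam) :
    let Y : Fin m → Fin n → ℝ := fun i j =>
      if Real.sqrt (∑ j', (X i j')^2) = 0 then 0
      else max (1 - lam / Real.sqrt (∑ j', (X i j')^2)) 0 * X i j
    let f : (Fin m → Fin n → ℝ) → ℝ := fun Z =>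
      (1/2) * (∑ i, ∑ j, (Z i j - X i j)^2) + lam * ∑ i, Real.sqrt (∑ j, (Z i j)^2)
    ∀ Z : Fin m → Fin n → ℝ, f Y ≤ f Z := by
  intro Y f Z
  have hrows : ∀ W : Fin m → Fin n → ℝ, f W =
      ∑ i, (1 / 2 * ‖WithLp.toLp 2 (W i) - WithLp.toLp 2 (X i)‖ ^ 2 + lam * ‖WithLp.toLp 2 (W i)‖) := by
    intro W
    simp only [f, EuclideanSpace.norm_toLp_sub_sq, EuclideanSpace.norm_toLp, Finset.mul_sum,
      Finset.sum_add_distrib]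
  rw [hrows, hrows]
  simp only [Y, ← groupSoftThreshold_toLp]
  exact Finset.sum_le_sum fun i _ => groupSoftThreshold_minimizes hlam.le _ _
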